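/- Under the hypotheses of the previous statement, if additionally each Tᵢ(t) has variance σ² and the finishing times across τ epochs satisfy S_A = τ(1+n/b)μ and S_F = τ·E[max_i Tᵢ], then S_F ≤ (1 + (σ/μ)√(n−1))·(1 + n/b)^{−1}·S_A ≤ (1 + (σ/μ)√(n−1))·S_A. -/

import Mathlib

open MeasureTheory Finset

private lemma integrable_sup'' {Ω : Type*} [MeasurableSpace Ω] (P : Measure Ω)
    {ι : Type*} (s : Finset ι) (H : s.Nonempty) (f : ι → Ω → ℝ)
    (hf : ∀ i ∈ s, Integrable (f i) P) :
    Integrable (fun ω => s.sup' H (fun i => f i ω)) P := by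
  have : (fun ω => s.sup' H (fun i => f i ω)) = s.sup' H f := by
    funext ω; rw [Finset.sup'_apply]
  rw [this]
  exact Finset.sup'_induction (p := fun g => Integrable g P) H f
    (fun a ha b hb => ha.sup hb) hf

private lemma det_bound' {n : ℕ} (hn : 1 ≤ n) (μ : ℝ) (y : Fin n → ℝ)
    (hne : (Finset.univ : Finset (Fin n)).Nonempty) :
    Finset.univ.sup' hne y ≤ (∑ i, y i) / n +
      Real.sqrt ((n - 1) / n) * Real.sqrt (∑ i, (y i - μ) ^ 2) := by
  have hn0 : (0:ℝ) < n := by exact_mod_cast hn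
  have hn1 : (0:ℝ) ≤ (n:ℝ) - 1 := by
    have : (1:ℝ) ≤ n := by exact_mod_cast hn
    linarith
  set m : ℝ := (∑ i, y i) / n with hm
  have hsum0 : ∑ i, (y i - m) = 0 := by
    rw [Finset.sum_sub_distrib, Finset.sum_const, Finset.card_univ, Fintype.card_fin]
    rw [nsmul_eq_mul, hm, mul_div_cancel₀ _ hn0.ne', sub_self]
  have hS : ∑ i, (y i - m) ^ 2 ≤ ∑ i, (y i - μ) ^ 2 := by
    have h : ∑ i, (y i - μ) ^ 2 = ∑ i, (y i - m) ^ 2 + 2 * (m - μ) * ∑ i, (y i - m)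
        + n * (m - μ) ^ 2 := by
      rw [Finset.mul_sum, ← Finset.sum_add_distrib]
      have : (n : ℝ) * (m - μ) ^ 2 = ∑ _i : Fin n, (m - μ)^2 := by
        rw [Finset.sum_const, Finset.card_univ, Fintype.card_fin, nsmul_eq_mul]
      rw [this, ← Finset.sum_add_distrib]
      exact Finset.sum_congr rfl fun i _ => by ring
    rw [hsum0, mul_zero, add_zero] at h
    nlinarith [sq_nonneg (m - μ)]
  obtain ⟨k, -, hk⟩ := Finset.exists_mem_eq_sup' hne y
  rw [hk]
  rcases le_or_gt (y k) m with h | h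
  · have : 0 ≤ Real.sqrt ((n - 1) / n) * Real.sqrt (∑ i, (y i - μ) ^ 2) :=
      mul_nonneg (Real.sqrt_nonneg _) (Real.sqrt_nonneg _)
    linarith
  · have hd0 : 0 < y k - m := by linarith
    have h2 : (∑ i ∈ Finset.univ.erase k, (y i - m)) + (y k - m) = ∑ i, (y i - m) :=
      Finset.sum_erase_add Finset.univ (fun i => y i - m) (Finset.mem_univ k)
    have hdsum : y k - m = -∑ i ∈ Finset.univ.erase k, (y i - m) := by
      rw [hsum0] at h2; linarith
    have hc : ((Finset.univ.erase k).card : ℝ) = n - 1 := by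
      rw [Finset.card_erase_of_mem (Finset.mem_univ k), Finset.card_univ, Fintype.card_fin,
        Nat.cast_sub hn, Nat.cast_one]
    have hcs : (∑ i ∈ Finset.univ.erase k, (y i - m)) ^ 2 ≤
        ((n:ℝ) - 1) * ∑ i ∈ Finset.univ.erase k, (y i - m) ^ 2 := by
      have hcard := sq_sum_le_card_mul_sum_sq (s := Finset.univ.erase k)
        (f := fun i => y i - m)
      rw [hc] at hcard
      exact hcard
    have herase : (∑ i ∈ Finset.univ.erase k, (y i - m) ^ 2) + (y k - m) ^ 2
        = ∑ i, (y i - m) ^ 2 :=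
      Finset.sum_erase_add Finset.univ (fun i => (y i - m) ^ 2) (Finset.mem_univ k)
    have h1 : (y k - m) ^ 2 ≤ ((n:ℝ) - 1) * (∑ i, (y i - m) ^ 2 - (y k - m) ^ 2) := by
      calc (y k - m) ^ 2 = (∑ i ∈ Finset.univ.erase k, (y i - m)) ^ 2 := by
            rw [hdsum]; ring
        _ ≤ ((n:ℝ) - 1) * ∑ i ∈ Finset.univ.erase k, (y i - m) ^ 2 := hcs
        _ = _ := by rw [← herase]; ring
    have hd2 : (y k - m) ^ 2 ≤ (n - 1) / n * ∑ i, (y i - μ) ^ 2 := by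
      have h2' : (n:ℝ) * (y k - m) ^ 2 ≤ (n - 1) * ∑ i, (y i - m) ^ 2 := by nlinarith
      rw [div_mul_eq_mul_div, le_div_iff₀ hn0]
      nlinarith
    have hfin : y k - m ≤ Real.sqrt ((n - 1) / n) * Real.sqrt (∑ i, (y i - μ) ^ 2) := by
      rw [← Real.sqrt_mul (div_nonneg hn1 hn0.le)]
      exact (Real.le_sqrt' hd0).mpr hd2
    linarith

theorem stmt_8 {Ω : Type*} [MeasurableSpace Ω] (P : Measure Ω) [IsProbabilityMeasure P]
    (n : ℕ) (hn : 1 ≤ n) (b μ σ : ℝ) (hb : 0 < b) (hμ : 0 < μ) (hσ : 0 ≤ σ)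
    (τ : ℕ) (T : Fin n → Ω → ℝ)
    (hInt : ∀ i, Integrable (T i) P)
    (hInt2 : ∀ i, Integrable (fun ω => (T i ω - μ) ^ 2) P)
    (hmean : ∀ i, ∫ ω, T i ω ∂P = μ)
    (hvar : ∀ i, ∫ ω, (T i ω - μ) ^ 2 ∂P = σ ^ 2)
    (hne : (Finset.univ : Finset (Fin n)).Nonempty)
    (SA SF : ℝ)
    (hSA : SA = τ * ((1 + n / b) * μ))
    (hSF : SF = τ * ∫ ω, Finset.univ.sup' hne (fun i => T i ω) ∂P) :
    SF ≤ (1 + (σ / μ) * Real.sqrt (n - 1)) * (1 + n / b)⁻¹ * SA ∧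
      (1 + (σ / μ) * Real.sqrt (n - 1)) * (1 + n / b)⁻¹ * SA ≤
        (1 + (σ / μ) * Real.sqrt (n - 1)) * SA := by
  have hn0 : (0:ℝ) < n := by exact_mod_cast hn
  have hn1 : (0:ℝ) ≤ (n:ℝ) - 1 := by
    have : (1:ℝ) ≤ n := by exact_mod_cast hn
    linarith
  set G : Ω → ℝ := fun ω => ∑ i, (T i ω - μ) ^ 2 with hG
  have hGint : Integrable G P := by
    simpa [hG] using integrable_finset_sum Finset.univ (fun i (_ : i ∈ Finset.univ) => hInt2 i)
  have hGnn : ∀ ω, 0 ≤ G ω := fun ω => Finset.sum_nonneg fun i _ => sq_nonneg _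
  have hGI : ∫ ω, G ω ∂P = n * σ ^ 2 := by
    rw [hG]
    rw [integral_finset_sum Finset.univ (fun i _ => hInt2 i)]
    simp [hvar, Finset.sum_const]
  have hsqrtGint : Integrable (fun ω => Real.sqrt (G ω)) P := by
    refine Integrable.mono' ((integrable_const (1:ℝ)).add hGint)
      (Real.continuous_sqrt.comp_aestronglyMeasurable hGint.1) ?_
    filter_upwards with ω
    rw [Real.norm_eq_abs, abs_of_nonneg (Real.sqrt_nonneg _)]
    simp only [Pi.add_apply]
    nlinarith [Real.sq_sqrt (hGnn ω), Real.sqrt_nonneg (G ω)]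
  have hJ : ∫ ω, Real.sqrt (G ω) ∂P ≤ σ * Real.sqrt n := by
    have := ConcaveOn.le_map_integral (μ := P) (s := Set.Ici (0:ℝ)) (f := G)
      (g := Real.sqrt) Real.strictConcaveOn_sqrt.concaveOn
      Real.continuous_sqrt.continuousOn isClosed_Ici
      (Filter.Eventually.of_forall fun ω => hGnn ω) hGint hsqrtGint
    calc ∫ ω, Real.sqrt (G ω) ∂P ≤ Real.sqrt (∫ ω, G ω ∂P) := this
      _ = Real.sqrt ((n:ℝ) * σ ^ 2) := by rw [hGI]
      _ = σ * Real.sqrt n := by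
          rw [Real.sqrt_mul hn0.le, Real.sqrt_sq hσ, mul_comm]
  have hsupInt : Integrable (fun ω => Finset.univ.sup' hne (fun i => T i ω)) P :=
    integrable_sup'' P Finset.univ hne T (fun i _ => hInt i)
  have hmeanInt : Integrable (fun ω => (∑ i, T i ω) / n) P := by
    have := (integrable_finset_sum Finset.univ (fun i (_ : i ∈ Finset.univ) => hInt i)).div_const (n:ℝ)
    simpa using this
  have hmeanI : ∫ ω, (∑ i, T i ω) / n ∂P = μ := by
    rw [integral_div, integral_finset_sum Finset.univ (fun i _ => hInt i)]
    simp [hmean, Finset.sum_const]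
    field_simp
  have hM : (∫ ω, Finset.univ.sup' hne (fun i => T i ω) ∂P) ≤ μ + σ * Real.sqrt (n - 1) := by
    have hmono : (∫ ω, Finset.univ.sup' hne (fun i => T i ω) ∂P) ≤
        ∫ ω, ((∑ i, T i ω) / n + Real.sqrt ((n - 1) / n) * Real.sqrt (G ω)) ∂P := by
      refine integral_mono hsupInt (hmeanInt.add (hsqrtGint.const_mul _)) ?_
      intro ω
      exact det_bound' hn μ (fun i => T i ω) hne
    have hrhs : ∫ ω, ((∑ i, T i ω) / n + Real.sqrt ((n - 1) / n) * Real.sqrt (G ω)) ∂P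
        = μ + Real.sqrt ((n - 1) / n) * ∫ ω, Real.sqrt (G ω) ∂P := by
      rw [integral_add hmeanInt (hsqrtGint.const_mul _), hmeanI, integral_const_mul]
    have hfact : Real.sqrt ((n - 1) / n) * (σ * Real.sqrt n) = σ * Real.sqrt (n - 1) := by
      rw [Real.sqrt_div hn1]
      have hsn : Real.sqrt n ≠ 0 := by positivity
      field_simp
    have hle : Real.sqrt ((n - 1) / n) * ∫ ω, Real.sqrt (G ω) ∂P ≤ σ * Real.sqrt (n - 1) := by
      calc Real.sqrt ((n - 1) / n) * ∫ ω, Real.sqrt (G ω) ∂P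
          ≤ Real.sqrt ((n - 1) / n) * (σ * Real.sqrt n) :=
            mul_le_mul_of_nonneg_left hJ (Real.sqrt_nonneg _)
        _ = σ * Real.sqrt (n - 1) := hfact
    rw [hrhs] at hmono
    linarith
  have hK : (0:ℝ) < 1 + n / b := by positivity
  have hc0 : (0:ℝ) ≤ 1 + (σ / μ) * Real.sqrt (n - 1) := by positivity
  constructor
  · have key : (1 + (σ / μ) * Real.sqrt (n - 1)) * (1 + n / b)⁻¹ * SA
        = τ * (μ + σ * Real.sqrt (n - 1)) := by
      rw [hSA]
      field_simp
    rw [key, hSF]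
    have := mul_le_mul_of_nonneg_left hM (by positivity : (0:ℝ) ≤ (τ:ℝ))
    linarith
  · have hSA0 : 0 ≤ SA := by
      rw [hSA]; positivity
    have hinv : (1 + (n:ℝ) / b)⁻¹ ≤ 1 := by
      have h1 : (1:ℝ) ≤ 1 + n / b := by nlinarith [div_nonneg hn0.le hb.le]
      exact inv_le_one_of_one_le₀ h1
    calc (1 + (σ / μ) * Real.sqrt (n - 1)) * (1 + n / b)⁻¹ * SA
        ≤ (1 + (σ / μ) * Real.sqrt (n - 1)) * 1 * SA := by
          apply mul_le_mul_of_nonneg_right _ hSA0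
          exact mul_le_mul_of_nonneg_left hinv hc0
      _ = (1 + (σ / μ) * Real.sqrt (n - 1)) * SA := by ring
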